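/- Let h = h_{1,1} be as defined. Then neither the sequence (h(n))_{n∈ℕ} nor the subsequence (h(2n))_{n∈ℕ} satisfies a linear recurrence: there do not exist d ≥ 1, rational constants c_1, …, c_d, and N ∈ ℕ such that h(n+d) = c_1 h(n+d-1) + ⋯ + c_d h(n) for all n ≥ N, and likewise there do not exist d ≥ 1, rational constants c_1, …, c_d, and N ∈ ℕ such that h(2(n+d)) = c_1 h(2(n+d-1)) + ⋯ + c_d h(2n) for all n ≥ N. -/

import Mathlib

/-!
Since h(2k+1) = k+1 and h(2k+2) = h(k+1) + h(2k), the even terms a(k) = h(2k) satisfy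
a(k+1) = a(k) + h(k+1), and h(m) ≤ a(k) for m ≤ 2k. Hence a(n) ≤ (n+1) a(⌈n/2⌉), so a (and
h ≤ a) is O(ρⁿ) for every ρ > 1, while (k+1) a(k) ≤ a(4k+2), so a (and h) outgrows every
polynomial. But a subexponential sequence annihilated by p(shift), p monic, is O(n^deg p):
split off a root μ of p; if |μ| > 1, the component of the sequence along μ is geometric of
ratio μ and subexponential, hence zero, and if |μ| ≤ 1, summing the recursion costs one power
of n.
-/

open Polynomial Asymptotics Filter Finset

def shift : Module.End ℂ (ℕ → ℂ) := LinearMap.funLeft ℂ ℂ (· + 1)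

@[simp]
theorem shift_apply (s : ℕ → ℂ) (n : ℕ) : shift s n = s (n + 1) := rfl

theorem shift_pow_apply (k : ℕ) (s : ℕ → ℂ) (n : ℕ) : (shift ^ k) s n = s (n + k) := by
  induction k generalizing n with
  | zero => rfl
  | succ k ih => rw [pow_succ', Module.End.mul_apply, shift_apply, ih, add_right_comm, add_assoc]

theorem aeval_X_sub_C_shift_apply (μ : ℂ) (s : ℕ → ℂ) (n : ℕ) :
    aeval shift (X - C μ) s n = s (n + 1) - μ * s n := by
  simp [Module.algebraMap_end_apply]

def subexponential : Submodule ℂ (ℕ → ℂ) where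
  carrier := {s | ∀ ρ : ℝ, 1 < ρ → s =O[atTop] (ρ ^ ·)}
  add_mem' hs ht ρ hρ := (hs ρ hρ).add (ht ρ hρ)
  zero_mem' _ _ := isBigO_zero _ _
  smul_mem' c _ hs ρ hρ := (hs ρ hρ).const_smul_left c

theorem shift_mem_subexponential {s : ℕ → ℂ} (hs : s ∈ subexponential) :
    shift s ∈ subexponential := by
  intro ρ hρ
  have h := (hs ρ hρ).comp_tendsto (tendsto_add_atTop_nat 1)
  refine h.trans (IsBigO.of_bound ρ (Eventually.of_forall fun n => ?_))
  simp [pow_succ, abs_of_pos (zero_lt_one.trans hρ), mul_comm]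

theorem aeval_shift_mem_subexponential (p : ℂ[X]) {s : ℕ → ℂ} (hs : s ∈ subexponential) :
    aeval shift p s ∈ subexponential :=
  aeval_apply_smul_mem_of_le_comap hs p shift fun _ => shift_mem_subexponential

theorem eq_zero_of_mem_subexponential_of_succ_eq_mul {g : ℕ → ℂ} {μ : ℂ}
    (hg : g ∈ subexponential) (hμ : 1 < ‖μ‖) (hshift : ∀ n, g (n + 1) = μ * g n) : g = 0 := by
  have hgeom : ∀ n, g n = μ ^ n * g 0 := by
    intro n
    induction n with
    | zero => simp
    | succ n ih => rw [hshift, ih, pow_succ]; ring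
  by_contra hne
  have h0 : g 0 ≠ 0 := fun h0 => hne (funext fun n => by simp [hgeom n, h0])
  obtain ⟨ρ, hρ1, hρμ⟩ := exists_between hμ
  have hpow : (fun n => μ ^ n) =O[atTop] (ρ ^ ·) := by
    refine (IsBigO.of_bound ‖g 0‖⁻¹ (Eventually.of_forall fun n => ?_)).trans (hg ρ hρ1)
    rw [hgeom n, norm_mul, mul_comm, mul_inv_cancel_right₀ (norm_ne_zero_iff.mpr h0)]
  have hnorm : (fun n => ‖μ‖ ^ n) =O[atTop] (fun n => μ ^ n) :=
    IsBigO.of_bound 1 (Eventually.of_forall fun n => by simp [norm_pow])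
  have hμ0 : μ ≠ 0 := norm_pos_iff.mp (zero_lt_one.trans hμ)
  have hlt := isLittleO_pow_pow_of_lt_left (zero_le_one.trans hρ1.le) hρμ
  exact isLittleO_irrefl (Eventually.of_forall fun n => pow_ne_zero n hμ0).frequently
    ((hpow.trans_isLittleO hlt).trans_isBigO hnorm)

theorem norm_le_of_norm_sub_mul_le {s : ℕ → ℂ} {μ : ℂ} (hμ : ‖μ‖ ≤ 1) {C : ℝ} {e : ℕ}
    (hb : ∀ n : ℕ, ‖s (n + 1) - μ * s n‖ ≤ C * (n + 1) ^ e) (n : ℕ) :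
    ‖s n‖ ≤ (‖s 0‖ + C) * (n + 1) ^ (e + 1) := by
  have hC : 0 ≤ C := by simpa using (norm_nonneg _).trans (hb 0)
  induction n with
  | zero => simpa using hC
  | succ n ih =>
    have hstep : ‖s (n + 1)‖ ≤ ‖s n‖ + C * (n + 1) ^ e := calc
      ‖s (n + 1)‖ = ‖μ * s n + (s (n + 1) - μ * s n)‖ := by ring_nf
      _ ≤ ‖μ‖ * ‖s n‖ + ‖s (n + 1) - μ * s n‖ := by rw [← norm_mul]; exact norm_add_le _ _
      _ ≤ ‖s n‖ + C * (n + 1) ^ e := add_le_add (mul_le_of_le_one_left (norm_nonneg _) hμ) (hb n)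
    calc ‖s (n + 1)‖ ≤ (‖s 0‖ + C) * (n + 1) ^ (e + 1) + C * (n + 1) ^ e := by linarith
      _ ≤ (‖s 0‖ + C) * (n + 1) ^ (e + 1) + (‖s 0‖ + C) * (n + 1) ^ e := by
        gcongr; exact le_add_of_nonneg_left (norm_nonneg _)
      _ = (‖s 0‖ + C) * ((n + 1) ^ e * (n + 2)) := by ring
      _ ≤ (‖s 0‖ + C) * ((n + 2) ^ e * (n + 2)) := by gcongr; linarith
      _ = (‖s 0‖ + C) * (((n + 1 : ℕ) : ℝ) + 1) ^ (e + 1) := by push_cast; ring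

theorem exists_norm_le_of_aeval_shift_eq_zero {p : ℂ[X]} (hp : p.Monic) {s : ℕ → ℂ}
    (hs : s ∈ subexponential) (hps : aeval shift p s = 0) :
    ∃ C, ∀ n : ℕ, ‖s n‖ ≤ C * (n + 1) ^ p.natDegree := by
  induction hdeg : p.natDegree generalizing p s with
  | zero =>
    rw [hp.natDegree_eq_zero.mp hdeg, map_one, Module.End.one_apply] at hps
    exact ⟨0, fun n => by simp [hps]⟩
  | succ e ih =>
    obtain ⟨μ, hμ⟩ :=
      Complex.exists_root (natDegree_pos_iff_degree_pos.mp (by rw [hdeg]; exact e.succ_pos))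
    have hpq : (X - C μ) * (p /ₘ (X - C μ)) = p := mul_divByMonic_eq_iff_isRoot.mpr hμ
    have hq : (p /ₘ (X - C μ)).Monic := (monic_X_sub_C μ).of_mul_monic_left (hpq.symm ▸ hp)
    have hqdeg : (p /ₘ (X - C μ)).natDegree = e := by
      rw [natDegree_divByMonic _ (monic_X_sub_C μ), hdeg, natDegree_X_sub_C]; rfl
    have hfactor : ∀ f g : ℂ[X], f * g = p → aeval shift f (aeval shift g s) = 0 := by
      intro f g hfg
      rw [← Module.End.mul_apply, ← map_mul, hfg, hps]
    rcases le_or_gt ‖μ‖ 1 with hμ1 | hμ1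
    · obtain ⟨C, hC⟩ := ih hq (aeval_shift_mem_subexponential _ hs)
        (hfactor _ _ ((mul_comm _ _).trans hpq)) hqdeg
      exact ⟨_, norm_le_of_norm_sub_mul_le hμ1 fun n => by
        rw [← aeval_X_sub_C_shift_apply]; exact hC n⟩
    · have hg := eq_zero_of_mem_subexponential_of_succ_eq_mul
        (aeval_shift_mem_subexponential _ hs) hμ1 fun n => by
        rw [← sub_eq_zero, ← aeval_X_sub_C_shift_apply, hfactor _ _ hpq]; rfl
      obtain ⟨C, hC⟩ := ih hq hs hg hqdeg
      refine ⟨max C 0, fun n => (hC n).trans ?_⟩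
      gcongr
      · exact le_max_left _ _
      · linarith
      · omega

theorem eventually_add_one_le_pow_div_two {ρ : ℝ} (hρ : 1 < ρ) :
    ∀ᶠ n : ℕ in atTop, (n : ℝ) + 1 ≤ ρ ^ (n / 2) := by
  have hlin : ∀ᶠ k : ℕ in atTop, (k : ℝ) ≤ 4⁻¹ * ρ ^ k := by
    simpa [abs_of_pos (zero_lt_one.trans hρ)] using
      (isLittleO_coe_const_pow_of_one_lt (R := ℝ) hρ).bound (by norm_num : (0 : ℝ) < 4⁻¹)
  have hbig : ∀ᶠ k : ℕ in atTop, 4 ≤ ρ ^ k :=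
    (tendsto_pow_atTop_atTop_of_one_lt hρ).eventually_ge_atTop 4
  filter_upwards [(Nat.tendsto_div_const_atTop two_ne_zero).eventually (hlin.and hbig)] with n hn
  calc (n : ℝ) + 1 ≤ 2 * ((n / 2 : ℕ) : ℝ) + 2 := by
        exact_mod_cast (by omega : n + 1 ≤ 2 * (n / 2) + 2)
    _ ≤ ρ ^ (n / 2) := by linarith [hn.1, hn.2]

theorem natCast_mem_subexponential_of_le_mul_half {u : ℕ → ℕ}
    (hu : ∀ n, u n ≤ (n + 1) * u ((n + 1) / 2)) :
    (fun n => (u n : ℂ)) ∈ subexponential := by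
  intro ρ hρ
  obtain ⟨N, hN⟩ := eventually_atTop.mp
    ((eventually_add_one_le_pow_div_two hρ).and (eventually_ge_atTop 2))
  set C := ∑ m ∈ range N, (u m : ℝ)
  have hC : 0 ≤ C := sum_nonneg fun _ _ => Nat.cast_nonneg _
  have key : ∀ n, (u n : ℝ) ≤ C * ρ ^ n := by
    intro n
    induction n using Nat.strong_induction_on with
    | _ n ih =>
      rcases lt_or_ge n N with hn | hn
      · calc (u n : ℝ) ≤ C := single_le_sum (f := fun m => (u m : ℝ))
              (fun _ _ => Nat.cast_nonneg _) (mem_range.mpr hn)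
          _ ≤ C * ρ ^ n := le_mul_of_one_le_right hC (one_le_pow₀ hρ.le)
      · obtain ⟨hpow, h2⟩ := hN n hn
        calc (u n : ℝ) ≤ (n + 1) * u ((n + 1) / 2) := by exact_mod_cast hu n
          _ ≤ ρ ^ (n / 2) * (C * ρ ^ ((n + 1) / 2)) := by gcongr; exact ih _ (by omega)
          _ = C * ρ ^ n := by rw [mul_left_comm, ← pow_add, show n / 2 + (n + 1) / 2 = n by omega]
  exact IsBigO.of_bound C (Eventually.of_forall fun n => by
    simpa [abs_of_pos (zero_lt_one.trans hρ)] using key n)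

theorem frequently_mul_pow_lt {u : ℕ → ℕ} (hu : ∀ n, n ≤ u n)
    (hmul : ∀ k, (k + 1) * u k ≤ u (4 * k + 2)) (K : ℕ) (C : ℝ) :
    ∃ᶠ n in atTop, C * (n + 1) ^ K < u n := by
  induction K generalizing C with
  | zero =>
    refine Eventually.frequently ?_
    filter_upwards [tendsto_natCast_atTop_atTop.eventually_gt_atTop C] with n hn
    simpa using hn.trans_le (by exact_mod_cast hu n)
  | succ K ih =>
    by_contra hbound
    simp only [not_frequently, not_lt] at hbound
    have hC : 0 ≤ C := by
      obtain ⟨n, hn⟩ := hbound.exists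
      exact nonneg_of_mul_nonneg_left ((Nat.cast_nonneg _).trans hn) (by positivity)
    have htendsto : Tendsto (fun k => 4 * k + 2) atTop atTop :=
      tendsto_atTop_atTop.mpr fun b => ⟨b, fun k hk => by omega⟩
    obtain ⟨k, hlt, hk⟩ :=
      ((ih (4 ^ (K + 1) * C)).and_eventually (htendsto.eventually hbound)).exists
    have hmulk : ((k : ℝ) + 1) * u k ≤ u (4 * k + 2) := by exact_mod_cast hmul k
    have : ((k : ℝ) + 1) * u k ≤ (k + 1) * (4 ^ (K + 1) * C * (k + 1) ^ K) := calc
      _ ≤ C * (((4 * k + 2 : ℕ) : ℝ) + 1) ^ (K + 1) := hmulk.trans hk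
      _ ≤ C * (4 * (k + 1)) ^ (K + 1) := by gcongr; push_cast; linarith
      _ = (k + 1) * (4 ^ (K + 1) * C * (k + 1) ^ K) := by rw [mul_pow]; ring
    exact hlt.not_ge (le_of_mul_le_mul_left this (by positivity))

noncomputable def recurrencePoly (d : ℕ) (c : ℕ → ℂ) : ℂ[X] :=
  X ^ d - ∑ i ∈ Icc 1 d, C (c i) * X ^ (d - i)

theorem recurrencePoly_monic (d : ℕ) (c : ℕ → ℂ) : (recurrencePoly d c).Monic := by
  refine monic_X_pow_sub ((degree_sum_le _ _).trans_lt
    ((Finset.sup_lt_iff (WithBot.bot_lt_coe d)).mpr fun i hi =>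
      (degree_C_mul_X_pow_le _ _).trans_lt ?_))
  obtain ⟨hi1, hid⟩ := mem_Icc.mp hi
  exact Nat.cast_lt.mpr (by omega)

theorem aeval_shift_recurrencePoly_apply (d : ℕ) (c : ℕ → ℂ) (s : ℕ → ℂ) (n : ℕ) :
    aeval shift (recurrencePoly d c) s n = s (n + d) - ∑ i ∈ Icc 1 d, c i * s (n + (d - i)) := by
  simp [recurrencePoly, shift_pow_apply, Module.algebraMap_end_apply]

theorem no_eventual_linear_recurrence {s : ℕ → ℕ}
    (hsub : (fun n => (s n : ℂ)) ∈ subexponential)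
    (hsuper : ∀ (K : ℕ) (C : ℝ), ∃ᶠ n in atTop, C * (n + 1) ^ K < s n)
    (d : ℕ) (c : ℕ → ℚ) (N : ℕ) :
    ¬ ∀ n, N ≤ n → (s (n + d) : ℚ) = ∑ i ∈ Icc 1 d, c i * s (n + d - i) := by
  intro hrec
  set t := (shift ^ N) (fun n => (s n : ℂ))
  have ht : aeval shift (recurrencePoly d (c ·)) t = 0 := by
    funext n
    rw [aeval_shift_recurrencePoly_apply, Pi.zero_apply, sub_eq_zero]
    simp only [t, shift_pow_apply]
    rw [add_right_comm, Finset.sum_congr rfl fun i hi => by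
      rw [show n + (d - i) + N = n + N + d - i by have := (mem_Icc.mp hi).2; omega]]
    exact_mod_cast hrec (n + N) (by omega)
  have htsub : t ∈ subexponential := by simpa using aeval_shift_mem_subexponential (X ^ N) hsub
  obtain ⟨C, hC⟩ := exists_norm_le_of_aeval_shift_eq_zero (recurrencePoly_monic _ _) htsub ht
  obtain ⟨n, hlt, hNn⟩ := ((hsuper _ (max C 0)).and_eventually (eventually_ge_atTop N)).exists
  have hle := hC (n - N)
  simp only [t, shift_pow_apply, Nat.sub_add_cancel hNn, Complex.norm_natCast] at hle
  refine hlt.not_ge (hle.trans ?_)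
  gcongr
  · exact le_max_left _ _
  · exact_mod_cast Nat.sub_le n N

section HofstadterH

variable {h : ℤ → ℕ} (hinit : ∀ n : ℤ, n ≤ 1 → h n = 1)
  (hrec : ∀ n : ℤ, 2 ≤ n → h n = h (n - (h (n - 1) : ℤ)) + h (n - 2))

include hrec in
theorem h_two_mul_add_two {k : ℕ} (hk : h (2 * k + 1) = k + 1) :
    h (2 * k + 2) = h (k + 1) + h (2 * k) := by
  have := hrec (2 * k + 2) (by omega)
  rwa [show (2 * k + 2 - 1 : ℤ) = 2 * k + 1 by ring, hk, show (2 * k + 2 - 2 : ℤ) = 2 * k by ring,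
    show (2 * k + 2 - ((k + 1 : ℕ) : ℤ) : ℤ) = k + 1 by push_cast; ring] at this

include hinit hrec in
theorem h_two_mul_add_one_and_two_mul_le (k : ℕ) :
    h (2 * k + 1) = k + 1 ∧ 2 * k ≤ h (2 * k) := by
  induction k using Nat.strong_induction_on with
  | _ k ih =>
    rcases k with _ | k
    · simpa using hinit 1 le_rfl
    obtain ⟨hodd, hle⟩ := ih k k.lt_succ_self
    have hmid : 2 * k + 2 ≤ h (k + 1) + h (2 * k) := by
      rcases k.eq_zero_or_pos with rfl | hk
      · simp [hinit 1 le_rfl, hinit 0 zero_le_one]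
      · suffices 2 ≤ h (k + 1) by omega
        obtain ⟨t, ht | ht⟩ := Nat.even_or_odd' (k + 1)
        · have := (ih t (by omega)).2
          rw [show (k : ℤ) + 1 = 2 * t by omega]
          omega
        · have := (ih t (by omega)).1
          rw [show (k : ℤ) + 1 = 2 * t + 1 by omega]
          omega
    have heven := h_two_mul_add_two hrec hodd
    push_cast
    rw [show 2 * ((k : ℤ) + 1) = 2 * k + 2 by ring, heven]
    refine ⟨?_, by omega⟩
    -- h(2k+2) ≥ 2k+2, so the recursion at 2k+3 looks back into the initial values.
    have := hrec (2 * k + 3) (by omega)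
    rw [show (2 * k + 3 - 1 : ℤ) = 2 * k + 2 by ring, heven,
      show (2 * k + 3 - 2 : ℤ) = 2 * k + 1 by ring, hodd,
      hinit (2 * k + 3 - ((h (k + 1) + h (2 * k) : ℕ) : ℤ)) (by push_cast; omega)] at this
    rw [show 2 * k + 2 + 1 = (2 * k + 3 : ℤ) by ring, this]
    ring

def evenSubseq (h : ℤ → ℕ) (k : ℕ) : ℕ := h ((2 * k : ℕ) : ℤ)

include hinit in
theorem evenSubseq_zero : evenSubseq h 0 = 1 := hinit 0 zero_le_one

include hinit hrec

theorem h_two_mul_add_one (k : ℕ) : h (2 * k + 1) = k + 1 :=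
  (h_two_mul_add_one_and_two_mul_le hinit hrec k).1

theorem two_mul_le_evenSubseq (k : ℕ) : 2 * k ≤ evenSubseq h k := by
  simpa [evenSubseq] using (h_two_mul_add_one_and_two_mul_le hinit hrec k).2

theorem evenSubseq_succ (k : ℕ) : evenSubseq h (k + 1) = h ↑(k + 1) + evenSubseq h k := by
  simpa [evenSubseq, mul_add] using h_two_mul_add_two hrec (h_two_mul_add_one hinit hrec k)

theorem monotone_evenSubseq : Monotone (evenSubseq h) :=
  monotone_nat_of_le_succ fun k => by rw [evenSubseq_succ hinit hrec]; omega

theorem one_le_evenSubseq (k : ℕ) : 1 ≤ evenSubseq h k :=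
  evenSubseq_zero hinit ▸ monotone_evenSubseq hinit hrec k.zero_le

theorem h_le_evenSubseq {m k : ℕ} (hmk : m ≤ 2 * k) : h m ≤ evenSubseq h k := by
  obtain ⟨t, rfl | rfl⟩ := Nat.even_or_odd' m
  · exact monotone_evenSubseq hinit hrec (by omega : t ≤ k)
  · have := two_mul_le_evenSubseq hinit hrec k
    push_cast
    rw [h_two_mul_add_one hinit hrec]
    omega

theorem evenSubseq_le_one_add_mul {m k : ℕ} (hmk : m ≤ 2 * k) :
    evenSubseq h m ≤ 1 + m * evenSubseq h k := by
  induction m with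
  | zero => simp [evenSubseq_zero hinit]
  | succ m ih =>
    have := h_le_evenSubseq hinit hrec hmk
    have := ih (by omega)
    rw [evenSubseq_succ hinit hrec]
    linarith

theorem evenSubseq_le_succ_mul_half (n : ℕ) :
    evenSubseq h n ≤ (n + 1) * evenSubseq h ((n + 1) / 2) := by
  have := evenSubseq_le_one_add_mul hinit hrec (m := n) (k := (n + 1) / 2) (by omega)
  have := one_le_evenSubseq hinit hrec ((n + 1) / 2)
  linarith

theorem mul_evenSubseq_le (k m : ℕ) : m * evenSubseq h k ≤ evenSubseq h (2 * k + 2 * m) := by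
  induction m with
  | zero => simp
  | succ m ih =>
    have hk : evenSubseq h k ≤ evenSubseq h (k + m + 1) := monotone_evenSubseq hinit hrec (by omega)
    rw [show 2 * k + 2 * (m + 1) = 2 * k + 2 * m + 1 + 1 by ring, evenSubseq_succ hinit hrec,
      evenSubseq_succ hinit hrec, show 2 * k + 2 * m + 1 + 1 = 2 * (k + m + 1) by ring]
    change _ ≤ evenSubseq h (k + m + 1) + _
    linarith

theorem evenSubseq_mem_subexponential : (fun n => (evenSubseq h n : ℂ)) ∈ subexponential :=
  natCast_mem_subexponential_of_le_mul_half (evenSubseq_le_succ_mul_half hinit hrec)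

theorem frequently_mul_pow_lt_evenSubseq (K : ℕ) (C : ℝ) :
    ∃ᶠ n in atTop, C * (n + 1) ^ K < evenSubseq h n :=
  frequently_mul_pow_lt (fun n => by linarith [two_mul_le_evenSubseq hinit hrec n])
    (fun k => by simpa [show 2 * k + 2 * (k + 1) = 4 * k + 2 by ring] using
      mul_evenSubseq_le hinit hrec k (k + 1)) K C

theorem h_mem_subexponential : (fun n : ℕ => (h n : ℂ)) ∈ subexponential := fun ρ hρ =>
  (IsBigO.of_bound 1 (Eventually.of_forall fun n => by
    simpa using (h_le_evenSubseq hinit hrec (by omega : n ≤ 2 * n) : h n ≤ evenSubseq h n))).trans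
    (evenSubseq_mem_subexponential hinit hrec ρ hρ)

theorem frequently_mul_pow_lt_h (K : ℕ) (C : ℝ) : ∃ᶠ n : ℕ in atTop, C * (n + 1) ^ K < h n := by
  have htendsto : Tendsto (fun k : ℕ => 2 * k) atTop atTop :=
    tendsto_atTop_atTop.mpr fun b => ⟨b, fun k hk => by omega⟩
  refine htendsto.frequently
    ((frequently_mul_pow_lt_evenSubseq hinit hrec K (max C 0 * 2 ^ K)).mono fun k hk => ?_)
  calc C * (((2 * k : ℕ) : ℝ) + 1) ^ K ≤ max C 0 * (2 * (k + 1)) ^ K := by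
        gcongr
        · exact le_max_left _ _
        · push_cast; linarith
    _ = max C 0 * 2 ^ K * (k + 1) ^ K := by rw [mul_pow, mul_assoc]
    _ < evenSubseq h k := hk

end HofstadterH

/-- Neither `(h(n))_{n∈ℕ}` nor `(h(2n))_{n∈ℕ}` satisfies a linear
recurrence with rational constant coefficients (valid from some index `N` on),
where `h = h_{1,1}`. -/
theorem stmt7 (h : ℤ → ℕ)
    (hinit : ∀ n : ℤ, n ≤ 1 → h n = 1)
    (hrec : ∀ n : ℤ, 2 ≤ n → h n = h (n - (h (n - 1) : ℤ)) + h (n - 2)) :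
    (¬ ∃ (d : ℕ), 1 ≤ d ∧ ∃ (c : ℕ → ℚ) (N : ℕ), ∀ n : ℕ, N ≤ n →
      (h ((n + d : ℕ) : ℤ) : ℚ) =
        ∑ i ∈ Finset.Icc 1 d, c i * (h ((n + d - i : ℕ) : ℤ) : ℚ)) ∧
    (¬ ∃ (d : ℕ), 1 ≤ d ∧ ∃ (c : ℕ → ℚ) (N : ℕ), ∀ n : ℕ, N ≤ n →
      (h ((2 * (n + d) : ℕ) : ℤ) : ℚ) =
        ∑ i ∈ Finset.Icc 1 d, c i * (h ((2 * (n + d - i) : ℕ) : ℤ) : ℚ)) :=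
  ⟨fun ⟨d, _, c, N, hrecur⟩ => no_eventual_linear_recurrence (s := fun n => h n)
      (h_mem_subexponential hinit hrec) (frequently_mul_pow_lt_h hinit hrec) d c N hrecur,
    fun ⟨d, _, c, N, hrecur⟩ => no_eventual_linear_recurrence (s := evenSubseq h)
      (evenSubseq_mem_subexponential hinit hrec) (frequently_mul_pow_lt_evenSubseq hinit hrec)
      d c N hrecur⟩
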